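/- There is a universal constant C ∈ (0,∞) such that for every p ∈ [1,∞), every n ∈ ℕ, every metric space (M,d_M), and every f : ℍ → M, ∑_{x ∈ B_n} ∑_{y ∈ B_n} d_M(f(x),f(y))^p ≤ C (2n)^{p+4} ∑_{x ∈ B_{3n}} (d_M(f(xa),f(x))^p + d_M(f(xb),f(x))^p). -/

import Mathlib

/-- The discrete Heisenberg group, as ℤ³ with the Heisenberg multiplication
(equivalently, unit upper-triangular 3×3 integer matrices). -/
@[ext]
structure DH where
  x : ℤ
  y : ℤ
  z : ℤ

namespace DH

instance : Mul DH := ⟨fun a b => ⟨a.x + b.x, a.y + b.y, a.z + b.z + a.x * b.y⟩⟩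
instance : One DH := ⟨⟨0, 0, 0⟩⟩
instance : Inv DH := ⟨fun a => ⟨-a.x, -a.y, -a.z + a.x * a.y⟩⟩

lemma mul_def (a b : DH) : a * b = ⟨a.x + b.x, a.y + b.y, a.z + b.z + a.x * b.y⟩ := rfl
lemma one_def : (1 : DH) = ⟨0, 0, 0⟩ := rfl
lemma inv_def (a : DH) : a⁻¹ = ⟨-a.x, -a.y, -a.z + a.x * a.y⟩ := rfl

instance : Group DH where
  mul_assoc a b c := by
    simp only [mul_def, mk.injEq]
    refine ⟨by ring, by ring, by ring⟩
  one_mul a := by simp [mul_def, one_def]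
  mul_one a := by simp [mul_def, one_def]
  inv_mul_cancel a := by
    simp only [mul_def, inv_def, one_def, mk.injEq]
    refine ⟨by ring, by ring, by ring⟩

/-- The generator `a`. -/
def gA : DH := ⟨1, 0, 0⟩

/-- The generator `b`. -/
def gB : DH := ⟨0, 1, 0⟩

/-- The commutator `c = aba⁻¹b⁻¹`, a generator of the center. -/
def gC : DH := gA * gB * gA⁻¹ * gB⁻¹

/-- Word length with respect to the symmetric generating set `{a, b, a⁻¹, b⁻¹}`. -/
noncomputable def wordLen (g : DH) : ℕ :=
  sInf {n | ∃ l : List DH, l.length = n ∧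
    (∀ s ∈ l, s ∈ ({gA, gB, gA⁻¹, gB⁻¹} : Set DH)) ∧ l.prod = g}

/-- The left-invariant word metric on the discrete Heisenberg group. -/
noncomputable def dW (g h : DH) : ℕ := wordLen (g⁻¹ * h)

/-- The closed ball of radius `n` centered at the identity. -/
def Ball (n : ℕ) : Set DH := {g | dW g 1 ≤ n}

end DH

/-!
For `x, y ∈ B_n` write `x⁻¹ y ∈ B_{2n}` as a word `s₁ ⋯ s_k` with `k ≤ 2n` letters from
`{a, b, a⁻¹, b⁻¹}`. The triangle inequality along the path `x, x s₁, x s₁ s₂, …, y` and the power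
mean inequality give `d(f x, f y)^p ≤ k^(p-1) ∑ᵢ d(f (x wᵢ), f (x wᵢ sᵢ₊₁))^p`, where `wᵢ` are the
prefixes of the word. For a fixed word, `x ↦ x wᵢ` is injective and maps `B_n` into `B_{3n}`, so
summing over `x ∈ B_n` bounds each of the `k` terms by twice the total edge energy over `B_{3n}`.
Summing over the `|B_{2n}|` words finishes the proof, because `B_R` lies in the box
`|x|, |y| ≤ R, |z| ≤ R²` and so has at most `27 R⁴` elements.
-/

open Finset

lemma sum_comp_le_sum_of_injOn {ι κ β : Type*} [AddCommMonoid β] [PartialOrder β]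
    [IsOrderedAddMonoid β] {s : Finset ι} {t : Finset κ} {e : ι → κ} (he : Set.InjOn e s)
    (hst : ∀ x ∈ s, e x ∈ t) {g : κ → β} (hg : ∀ z ∈ t, 0 ≤ g z) :
    ∑ x ∈ s, g (e x) ≤ ∑ z ∈ t, g z := by
  classical
  rw [← sum_image he]
  exact sum_le_sum_of_subset_of_nonneg (image_subset_iff.2 hst) fun z hz _ => hg z hz

namespace DH

def gens : Set DH := {gA, gB, gA⁻¹, gB⁻¹}

lemma gA_zpow (m : ℤ) : gA ^ m = ⟨m, 0, 0⟩ := by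
  induction m using Int.induction_on with
  | zero => rfl
  | succ k ih => rw [zpow_add_one, ih]; simp [mul_def, gA]
  | pred k ih => rw [zpow_sub_one, ih]; simp [mul_def, inv_def, gA]; ring

lemma gB_zpow (m : ℤ) : gB ^ m = ⟨0, m, 0⟩ := by
  induction m using Int.induction_on with
  | zero => rfl
  | succ k ih => rw [zpow_add_one, ih]; simp [mul_def, gB]
  | pred k ih => rw [zpow_sub_one, ih]; simp [mul_def, inv_def, gB]; ring

lemma gC_zpow (m : ℤ) : gC ^ m = ⟨0, 0, m⟩ := by
  have gC_eq : gC = ⟨0, 0, 1⟩ := by simp [gC, gA, gB, inv_def, mul_def]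
  induction m using Int.induction_on with
  | zero => rfl
  | succ k ih => rw [zpow_add_one, ih, gC_eq]; simp [mul_def]
  | pred k ih => rw [zpow_sub_one, ih, gC_eq]; simp [mul_def, inv_def]; ring

lemma eq_gA_zpow_mul_gB_zpow_mul_gC_zpow (g : DH) :
    g = gA ^ g.x * gB ^ g.y * gC ^ (g.z - g.x * g.y) := by
  simp only [gA_zpow, gB_zpow, gC_zpow, mul_def]
  ext <;> simp

lemma closure_gA_gB : Subgroup.closure {gA, gB} = ⊤ := by
  refine eq_top_iff.2 fun g _ => ?_
  have ha : gA ∈ Subgroup.closure {gA, gB} := Subgroup.subset_closure (by simp)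
  have hb : gB ∈ Subgroup.closure {gA, gB} := Subgroup.subset_closure (by simp)
  have hc : gC ∈ Subgroup.closure {gA, gB} :=
    mul_mem (mul_mem (mul_mem ha hb) (inv_mem ha)) (inv_mem hb)
  rw [eq_gA_zpow_mul_gB_zpow_mul_gC_zpow g]
  exact mul_mem (mul_mem (zpow_mem ha _) (zpow_mem hb _)) (zpow_mem hc _)

lemma gens_eq : gens = {gA, gB} ∪ {gA, gB}⁻¹ := by
  ext s
  simp only [gens, Set.mem_union, Set.mem_insert_iff, Set.mem_singleton_iff, Set.mem_inv,
    inv_eq_iff_eq_inv, or_assoc]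

lemma inv_mem_gens {s : DH} (hs : s ∈ gens) : s⁻¹ ∈ gens := by
  rw [gens_eq] at hs ⊢
  rwa [← Set.mem_inv, Set.union_inv, inv_inv, Set.union_comm]

lemma exists_word (g : DH) : ∃ l : List DH, (∀ s ∈ l, s ∈ gens) ∧ l.prod = g := by
  have hg : g ∈ (Subgroup.closure {gA, gB}).toSubmonoid := by simp [closure_gA_gB]
  rw [Subgroup.closure_toSubmonoid, ← gens_eq] at hg
  exact Submonoid.exists_list_of_mem_closure hg

lemma wordLen_le_iff {g : DH} {n : ℕ} :
    wordLen g ≤ n ↔ ∃ l : List DH, l.length ≤ n ∧ (∀ s ∈ l, s ∈ gens) ∧ l.prod = g := by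
  constructor
  · intro h
    obtain ⟨l, hl, hprod⟩ := exists_word g
    have hne : {k | ∃ l : List DH, l.length = k ∧ (∀ s ∈ l, s ∈ gens) ∧ l.prod = g}.Nonempty :=
      ⟨l.length, l, rfl, hl, hprod⟩
    obtain ⟨l', hlen, hl', hprod'⟩ := Nat.sInf_mem hne
    exact ⟨l', hlen.le.trans h, hl', hprod'⟩
  · rintro ⟨l, hlen, hl, hprod⟩
    exact (Nat.sInf_le ⟨l, rfl, hl, hprod⟩ : wordLen g ≤ l.length).trans hlen

lemma reverse_map_inv_mem_gens {l : List DH} (hl : ∀ s ∈ l, s ∈ gens) :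
    ∀ s ∈ (l.map (·⁻¹)).reverse, s ∈ gens := by
  simp only [List.mem_reverse, List.mem_map]
  rintro _ ⟨t, ht, rfl⟩
  exact inv_mem_gens (hl t ht)

lemma wordLen_inv (g : DH) : wordLen g⁻¹ = wordLen g := by
  suffices h : ∀ g : DH, wordLen g⁻¹ ≤ wordLen g from le_antisymm (h g) (by simpa using h g⁻¹)
  intro g
  obtain ⟨l, hlen, hl, rfl⟩ := (wordLen_le_iff (g := g)).1 le_rfl
  exact wordLen_le_iff.2
    ⟨_, by simpa using hlen, reverse_map_inv_mem_gens hl, (List.prod_inv_reverse l).symm⟩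

lemma mem_Ball {g : DH} {n : ℕ} : g ∈ Ball n ↔ wordLen g ≤ n := by
  show wordLen (g⁻¹ * 1) ≤ n ↔ _
  rw [mul_one, wordLen_inv]

lemma mem_Ball_iff_exists_word {g : DH} {n : ℕ} :
    g ∈ Ball n ↔ ∃ l : List DH, l.length ≤ n ∧ (∀ s ∈ l, s ∈ gens) ∧ l.prod = g := by
  rw [mem_Ball, wordLen_le_iff]

lemma inv_mem_Ball {g : DH} {n : ℕ} (hg : g ∈ Ball n) : g⁻¹ ∈ Ball n := by
  rwa [mem_Ball, wordLen_inv, ← mem_Ball]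

lemma mul_mem_Ball {g h : DH} {m k : ℕ} (hg : g ∈ Ball m) (hh : h ∈ Ball k) :
    g * h ∈ Ball (m + k) := by
  obtain ⟨l₁, hlen₁, hl₁, rfl⟩ := mem_Ball_iff_exists_word.1 hg
  obtain ⟨l₂, hlen₂, hl₂, rfl⟩ := mem_Ball_iff_exists_word.1 hh
  refine mem_Ball_iff_exists_word.2 ⟨l₁ ++ l₂, by simp; omega, ?_, List.prod_append⟩
  simp only [List.mem_append]
  rintro s (hs | hs)
  exacts [hl₁ s hs, hl₂ s hs]

lemma prod_take_mem_Ball {l : List DH} {k : ℕ} (hlen : l.length ≤ k) (hl : ∀ s ∈ l, s ∈ gens)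
    (i : ℕ) : (l.take i).prod ∈ Ball k :=
  mem_Ball_iff_exists_word.2
    ⟨l.take i, (List.length_take_le' i l).trans hlen, fun s hs => hl s (List.mem_of_mem_take hs),
      rfl⟩

def equivProd : DH ≃ ℤ × ℤ × ℤ where
  toFun g := (g.x, g.y, g.z)
  invFun t := ⟨t.1, t.2.1, t.2.2⟩

noncomputable def box (k : ℕ) : Finset DH :=
  (Icc (-k : ℤ) k ×ˢ Icc (-k : ℤ) k ×ˢ Icc (-(k : ℤ) ^ 2) (k ^ 2)).map equivProd.symm.toEmbedding

lemma mem_box {g : DH} {k : ℕ} : g ∈ box k ↔ |g.x| ≤ k ∧ |g.y| ≤ k ∧ |g.z| ≤ (k : ℤ) ^ 2 := by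
  simp [box, mem_map_equiv, equivProd, abs_le]

lemma card_box (k : ℕ) : #(box k) = (2 * k + 1) ^ 2 * (2 * k ^ 2 + 1) := by
  have hk2 : (k : ℤ) ^ 2 = ((k ^ 2 : ℕ) : ℤ) := by push_cast; rfl
  rw [box, card_map, card_product, card_product, Int.card_Icc, Int.card_Icc, hk2]
  rw [show ((k : ℤ) + 1 - -k).toNat = 2 * k + 1 by omega,
    show ((k ^ 2 : ℕ) + 1 - -((k ^ 2 : ℕ) : ℤ)).toNat = 2 * k ^ 2 + 1 by omega]
  ring

lemma gen_mul_mem_box {s g : DH} {k : ℕ} (hs : s ∈ gens) (hg : g ∈ box k) :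
    s * g ∈ box (k + 1) := by
  obtain ⟨hx, hy, hz⟩ := mem_box.1 hg
  rw [abs_le] at hx hy hz
  rw [mem_box, abs_le, abs_le, abs_le]
  simp only [gens, Set.mem_insert_iff, Set.mem_singleton_iff] at hs
  rcases hs with rfl | rfl | rfl | rfl <;> simp only [mul_def, inv_def, gA, gB] <;> push_cast <;>
    refine ⟨⟨?_, ?_⟩, ⟨?_, ?_⟩, ⟨?_, ?_⟩⟩ <;> nlinarith

lemma prod_mem_box {l : List DH} (hl : ∀ s ∈ l, s ∈ gens) : l.prod ∈ box l.length := by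
  induction l with
  | nil => simp [mem_box, one_def]
  | cons s t ih =>
    rw [List.prod_cons]
    exact gen_mul_mem_box (hl s List.mem_cons_self)
      (ih fun u hu => hl u (List.mem_cons_of_mem s hu))

lemma box_mono {k m : ℕ} (h : k ≤ m) : box k ⊆ box m := by
  intro g hg
  obtain ⟨hx, hy, hz⟩ := mem_box.1 hg
  have h' : (k : ℤ) ≤ m := by exact_mod_cast h
  exact mem_box.2 ⟨hx.trans h', hy.trans h', hz.trans (by gcongr)⟩

lemma Ball_subset_box (n : ℕ) : Ball n ⊆ box n := by
  intro g hg
  obtain ⟨l, hlen, hl, rfl⟩ := mem_Ball_iff_exists_word.1 hg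
  exact box_mono hlen (prod_mem_box hl)

open scoped Classical in
noncomputable def ballFinset (n : ℕ) : Finset DH := {g ∈ box n | g ∈ Ball n}

@[simp]
lemma mem_ballFinset {g : DH} {n : ℕ} : g ∈ ballFinset n ↔ g ∈ Ball n := by
  simpa [ballFinset] using fun hg => Ball_subset_box n hg

lemma coe_ballFinset (n : ℕ) : (ballFinset n : Set DH) = Ball n :=
  Set.ext fun _ => mem_ballFinset

lemma card_ballFinset_le {n : ℕ} (hn : 1 ≤ n) : #(ballFinset n) ≤ 27 * n ^ 4 := by
  have hcard : #(ballFinset n) ≤ #(box n) :=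
    card_le_card fun _ hg => Ball_subset_box n (mem_ballFinset.1 hg)
  rw [card_box] at hcard
  have h₁ : (2 * n + 1) ^ 2 ≤ 9 * n ^ 2 := by nlinarith
  have h₂ : 2 * n ^ 2 + 1 ≤ 3 * n ^ 2 := by nlinarith
  nlinarith [Nat.mul_le_mul h₁ h₂]

lemma rpow_mul_card_ballFinset_le {p : ℝ} (hp : 0 < p) (n : ℕ) :
    (n : ℝ) ^ p * #(ballFinset n) ≤ 27 * (n : ℝ) ^ (p + 4) := by
  rcases Nat.eq_zero_or_pos n with rfl | hn
  · simp [Real.zero_rpow hp.ne', Real.zero_rpow (by linarith : p + 4 ≠ 0)]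
  · rw [Real.rpow_add (by exact_mod_cast hn), Real.rpow_ofNat]
    have : (#(ballFinset n) : ℝ) ≤ 27 * n ^ 4 := by exact_mod_cast card_ballFinset_le hn
    calc (n : ℝ) ^ p * #(ballFinset n) ≤ (n : ℝ) ^ p * (27 * n ^ 4) := by gcongr
      _ = _ := by ring

lemma tsum_Ball (n : ℕ) (g : DH → ℝ) : ∑' x : Ball n, g x = ∑ x ∈ ballFinset n, g x := by
  rw [← coe_ballFinset, Finset.tsum_subtype']

section Energy

variable {M : Type*} [PseudoMetricSpace M] (f : DH → M) (p : ℝ)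

noncomputable def edgeEnergy (z : DH) : ℝ :=
  dist (f (z * gA)) (f z) ^ p + dist (f (z * gB)) (f z) ^ p

lemma edgeEnergy_nonneg (z : DH) : 0 ≤ edgeEnergy f p z := by
  unfold edgeEnergy; positivity

/-- An edge `u — u s` with `s = a⁻¹` or `b⁻¹` is the edge `u s — (u s) a` or `u s — (u s) b`,
so it is counted by the energy at its other endpoint. -/
lemma dist_mul_gen_rpow_le {s : DH} (hs : s ∈ gens) (u : DH) :
    dist (f u) (f (u * s)) ^ p ≤ edgeEnergy f p u + edgeEnergy f p (u * s) := by
  have hu := edgeEnergy_nonneg f p u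
  have hus := edgeEnergy_nonneg f p (u * s)
  simp only [gens, Set.mem_insert_iff, Set.mem_singleton_iff] at hs
  rcases hs with rfl | rfl | rfl | rfl
  · refine le_add_of_le_of_nonneg ?_ hus
    rw [edgeEnergy, dist_comm]
    exact le_add_of_nonneg_right (by positivity)
  · refine le_add_of_le_of_nonneg ?_ hus
    rw [edgeEnergy, dist_comm]
    exact le_add_of_nonneg_left (by positivity)
  · refine le_add_of_nonneg_of_le hu ?_
    rw [edgeEnergy, inv_mul_cancel_right]
    exact le_add_of_nonneg_right (by positivity)
  · refine le_add_of_nonneg_of_le hu ?_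
    rw [edgeEnergy, inv_mul_cancel_right]
    exact le_add_of_nonneg_left (by positivity)

lemma dist_rpow_le_sum_edgeEnergy (hp : 1 ≤ p) {l : List DH} (hl : ∀ s ∈ l, s ∈ gens)
    (x : DH) :
    dist (f x) (f (x * l.prod)) ^ p ≤ (l.length : ℝ) ^ (p - 1) * ∑ i ∈ range l.length,
      (edgeEnergy f p (x * (l.take i).prod) + edgeEnergy f p (x * (l.take (i + 1)).prod)) := by
  set q : ℕ → DH := fun i => x * (l.take i).prod
  have path :
      dist (f x) (f (x * l.prod)) ≤ ∑ i ∈ range l.length, dist (f (q i)) (f (q (i + 1))) := by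
    simpa [q] using dist_le_range_sum_dist (fun i => f (q i)) l.length
  calc dist (f x) (f (x * l.prod)) ^ p
      ≤ (∑ i ∈ range l.length, dist (f (q i)) (f (q (i + 1)))) ^ p := by gcongr
    _ ≤ (l.length : ℝ) ^ (p - 1) * ∑ i ∈ range l.length, dist (f (q i)) (f (q (i + 1))) ^ p := by
      simpa using
        Real.rpow_sum_le_const_mul_sum_rpow_of_nonneg (range l.length) hp fun _ _ => dist_nonneg
    _ ≤ _ := by
      gcongr with i hi
      have hi : i < l.length := mem_range.1 hi
      have hstep : q (i + 1) = q i * l[i] := by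
        simp only [q, List.prod_take_succ l i hi, mul_assoc]
      show dist (f (q i)) (f (q (i + 1))) ^ p ≤ edgeEnergy f p (q i) + edgeEnergy f p (q (i + 1))
      rw [hstep]
      exact dist_mul_gen_rpow_le f p (hl _ (List.getElem_mem hi)) (q i)

lemma sum_edgeEnergy_mul_le {m : DH} {k : ℕ} (hm : m ∈ Ball k) (n : ℕ) :
    ∑ x ∈ ballFinset n, edgeEnergy f p (x * m) ≤ ∑ z ∈ ballFinset (n + k), edgeEnergy f p z :=
  sum_comp_le_sum_of_injOn (mul_left_injective m).injOn
    (fun _ hx => mem_ballFinset.2 (mul_mem_Ball (mem_ballFinset.1 hx) hm))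
    fun z _ => edgeEnergy_nonneg f p z

lemma sum_dist_mul_rpow_le (hp : 1 ≤ p) {w : DH} {k : ℕ} (hw : w ∈ Ball k) (n : ℕ) :
    ∑ x ∈ ballFinset n, dist (f x) (f (x * w)) ^ p ≤
      2 * (k : ℝ) ^ p * ∑ z ∈ ballFinset (n + k), edgeEnergy f p z := by
  obtain ⟨l, hlen, hl, rfl⟩ := mem_Ball_iff_exists_word.1 hw
  set E := ∑ z ∈ ballFinset (n + k), edgeEnergy f p z
  have hE (i : ℕ) : ∑ x ∈ ballFinset n, edgeEnergy f p (x * (l.take i).prod) ≤ E :=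
    sum_edgeEnergy_mul_le f p (prod_take_mem_Ball hlen hl i) n
  calc ∑ x ∈ ballFinset n, dist (f x) (f (x * l.prod)) ^ p
      ≤ ∑ x ∈ ballFinset n, (l.length : ℝ) ^ (p - 1) * ∑ i ∈ range l.length,
          (edgeEnergy f p (x * (l.take i).prod) + edgeEnergy f p (x * (l.take (i + 1)).prod)) :=
        sum_le_sum fun x _ => dist_rpow_le_sum_edgeEnergy f p hp hl x
    _ = (l.length : ℝ) ^ (p - 1) * ∑ i ∈ range l.length,
          (∑ x ∈ ballFinset n, edgeEnergy f p (x * (l.take i).prod) +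
            ∑ x ∈ ballFinset n, edgeEnergy f p (x * (l.take (i + 1)).prod)) := by
      rw [← mul_sum, sum_comm]
      simp only [sum_add_distrib]
    _ ≤ (l.length : ℝ) ^ (p - 1) * ∑ i ∈ range l.length, (E + E) := by
      gcongr with i
      exacts [hE i, hE (i + 1)]
    _ = 2 * (l.length : ℝ) ^ p * E := by
      have hpow : (l.length : ℝ) ^ p = (l.length : ℝ) ^ (p - 1) * l.length := by
        rw [← Real.rpow_add_one' (Nat.cast_nonneg _) (by linarith), sub_add_cancel]
      rw [sum_const, card_range, nsmul_eq_mul, hpow]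
      ring
    _ ≤ 2 * (k : ℝ) ^ p * E := by
      have hE0 : 0 ≤ E := sum_nonneg fun z _ => edgeEnergy_nonneg f p z
      gcongr

lemma sum_sum_dist_rpow_le (hp : 1 ≤ p) (n : ℕ) :
    ∑ x ∈ ballFinset n, ∑ y ∈ ballFinset n, dist (f x) (f y) ^ p ≤
      #(ballFinset (2 * n)) * (2 * ((2 * n : ℕ) : ℝ) ^ p *
        ∑ z ∈ ballFinset (3 * n), edgeEnergy f p z) := by
  calc ∑ x ∈ ballFinset n, ∑ y ∈ ballFinset n, dist (f x) (f y) ^ p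
      ≤ ∑ x ∈ ballFinset n, ∑ w ∈ ballFinset (2 * n), dist (f x) (f (x * w)) ^ p := by
        refine sum_le_sum fun x hx => ?_
        have hmem (y : DH) (hy : y ∈ ballFinset n) : x⁻¹ * y ∈ ballFinset (2 * n) := by
          rw [mem_ballFinset, two_mul]
          exact mul_mem_Ball (inv_mem_Ball (mem_ballFinset.1 hx)) (mem_ballFinset.1 hy)
        simpa using sum_comp_le_sum_of_injOn (mul_right_injective x⁻¹).injOn hmem
          (g := fun w => dist (f x) (f (x * w)) ^ p) fun _ _ => by positivity
    _ = ∑ w ∈ ballFinset (2 * n), ∑ x ∈ ballFinset n, dist (f x) (f (x * w)) ^ p := sum_comm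
    _ ≤ ∑ w ∈ ballFinset (2 * n),
          2 * ((2 * n : ℕ) : ℝ) ^ p * ∑ z ∈ ballFinset (3 * n), edgeEnergy f p z := by
        refine sum_le_sum fun w hw => ?_
        rw [show 3 * n = n + 2 * n by ring]
        exact sum_dist_mul_rpow_le f p hp (mem_ballFinset.1 hw) n
    _ = _ := by rw [sum_const, nsmul_eq_mul]

end Energy

end DH

open DH in
/-- Lemma 3.2: Kleiner's local Poincaré inequality on the discrete Heisenberg group,
for functions taking values in an arbitrary metric space. -/
theorem local_poincare_metric_space :
    ∃ C : ℝ, 0 < C ∧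
      ∀ p : ℝ, 1 ≤ p → ∀ (n : ℕ) (M : Type) [MetricSpace M] (f : DH → M),
        ∑' x : Ball n, ∑' y : Ball n, dist (f ↑x) (f ↑y) ^ p ≤
          C * (2 * (n : ℝ)) ^ (p + 4) *
            ∑' x : Ball (3 * n),
              (dist (f (↑x * gA)) (f ↑x) ^ p + dist (f (↑x * gB)) (f ↑x) ^ p) := by
  refine ⟨54, by norm_num, fun p hp n M _ f => ?_⟩
  have hlhs : ∑' x : Ball n, ∑' y : Ball n, dist (f ↑x) (f ↑y) ^ p =
      ∑ x ∈ ballFinset n, ∑ y ∈ ballFinset n, dist (f x) (f y) ^ p := by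
    rw [tsum_Ball n fun x => ∑' y : Ball n, dist (f x) (f ↑y) ^ p]
    exact sum_congr rfl fun x _ => tsum_Ball n fun y => dist (f x) (f y) ^ p
  have growth := rpow_mul_card_ballFinset_le (by linarith : 0 < p) (2 * n)
  have hE := sum_nonneg fun z (_ : z ∈ ballFinset (3 * n)) => edgeEnergy_nonneg f p z
  rw [hlhs]
  calc ∑ x ∈ ballFinset n, ∑ y ∈ ballFinset n, dist (f x) (f y) ^ p
      ≤ #(ballFinset (2 * n)) * (2 * ((2 * n : ℕ) : ℝ) ^ p *
          ∑ z ∈ ballFinset (3 * n), edgeEnergy f p z) := sum_sum_dist_rpow_le f p hp n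
    _ = 2 * (((2 * n : ℕ) : ℝ) ^ p * #(ballFinset (2 * n))) *
          ∑ z ∈ ballFinset (3 * n), edgeEnergy f p z := by ring
    _ ≤ 2 * (27 * ((2 * n : ℕ) : ℝ) ^ (p + 4)) * ∑ z ∈ ballFinset (3 * n), edgeEnergy f p z := by
        gcongr
    _ = 54 * (2 * n : ℝ) ^ (p + 4) * ∑' x : Ball (3 * n), edgeEnergy f p x := by
        rw [tsum_Ball (3 * n) (edgeEnergy f p)]
        push_cast
        ring
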